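/- Let X be a Banach space, I a discrete interval unbounded below, ρ > 0, and let F_t = L_t + N_t : U_t → U_{t+1} be semilinear with ‖Φ(t,s)‖ ≤ K·∏_{r=s}^{t-1} α_r for all s ≤ t (K ≥ 1, α_t ≥ 0, Φ the transition operator of (L_t)) and ‖N_t(u)‖ ≤ b_t + a_t‖u‖ for all t ∈ I', u ∈ U_t (a_t, b_t ≥ 0). If for every τ ∈ I one has lim_{s→∞} ∏_{r=τ−s}^{τ−1}(α_r + K a_r) = 0 and R_τ := K·∑_{s=−∞}^{τ−1} b_s·∏_{r=s+1}^{τ−1}(α_r + K a_r) < ∞, then (Δ) is pullback dissipative with pullback absorbing set 𝓐 := {(τ,u) : u ∈ U_τ, ‖u‖ ≤ ρ + R_τ}: for every τ ∈ I and every bounded nonautonomous set 𝓑 there is S ∈ ℕ with φ(τ;τ−s,𝓑(τ−s)) ⊆ 𝓐(τ) for all s ≥ S. If moreover lim_{s→∞} sup_{τ∈I} ∏_{r=τ−s}^{τ−1}(α_r + K a_r) = 0, then the absorption time S can be chosen independent of τ, i.e. (Δ) is uniformly pullback dissipative. -/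

import Mathlib

/-!
By variation of constants, `φ(τ; σ, u) = Φ(τ, σ) u + ∑_{σ ≤ r < τ} Φ(τ, r + 1) N_r(φ(r; σ, u))`, so
the bounds on `Φ` and `N` dominate `‖φ(t; σ, u)‖` by the solution of a scalar linear recursion
with coefficients `α` and forcing `K (b + a ‖φ‖)`. A discrete Gronwall argument absorbs the
`K a ‖φ‖` part into the coefficients, giving
`‖φ(τ; τ - s, u)‖ ≤ K ∏ (α + K a) ‖u‖ + K ∑ b ∏ (α + K a)`.
The second term is a partial sum of the nonnegative series defining `R τ`, hence at most `R τ`;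
the first is at most `ρ` as soon as the product drops below `ρ / (K C)` for a bound `C` of `𝓑`,
which happens for large `s` (uniformly in `τ` under the uniform hypothesis).
-/

open Filter Topology Metric Bornology

/-- Iterates of a nonautonomous difference equation: `sol F τ u n = φ(τ+n; τ, u)`. -/
def sol {X : Type*} (F : ℤ → X → X) (τ : ℤ) (u : X) : ℕ → X
  | 0 => u
  | n + 1 => F (τ + (n : ℤ)) (sol F τ u n)

/-- General solution `φ(t; τ, u)` of the difference equation `u_{t+1} = F_t(u_t)`. -/
def phi {X : Type*} (F : ℤ → X → X) (t τ : ℤ) (u : X) : X :=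
  sol F τ u (t - τ).toNat

/-- Transition operator: `transOp L s n = Φ(s+n, s) = L_{s+n-1} ⋯ L_s`. -/
def transOp {X : Type*} [NormedAddCommGroup X] [NormedSpace ℝ X]
    (L : ℤ → X →L[ℝ] X) (s : ℤ) : ℕ → (X →L[ℝ] X)
  | 0 => ContinuousLinearMap.id ℝ X
  | n + 1 => (L (s + (n : ℤ))).comp (transOp L s n)

open Finset

/-- The transition operator `Φ(t, s)` of the paper. -/
def transition {X : Type*} [NormedAddCommGroup X] [NormedSpace ℝ X]
    (L : ℤ → X →L[ℝ] X) (t s : ℤ) : X →L[ℝ] X :=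
  transOp L s (t - s).toNat

/-- The solution of the scalar recursion `w (t + 1) = A t * w t + g t`, `w σ = w₀`, for `t ≥ σ`. -/
noncomputable def linRecSol (σ : ℤ) (w₀ : ℝ) (A g : ℤ → ℝ) (t : ℤ) : ℝ :=
  (∏ r ∈ Ico σ t, A r) * w₀ + ∑ m ∈ Ico σ t, (∏ r ∈ Ico (m + 1) t, A r) * g m

section Transition

variable {X : Type*} [NormedAddCommGroup X] [NormedSpace ℝ X] (L : ℤ → X →L[ℝ] X)

@[simp]
theorem transition_self (s : ℤ) : transition L s s = ContinuousLinearMap.id ℝ X := by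
  simp [transition, transOp]

theorem transition_succ {s t : ℤ} (h : s ≤ t) :
    transition L (t + 1) s = (L t).comp (transition L t s) := by
  rw [transition, transition, show (t + 1 - s).toNat = (t - s).toNat + 1 by omega, transOp,
    Int.toNat_of_nonneg (sub_nonneg.2 h), add_sub_cancel]

theorem eq_transition_add_sum {x g : ℤ → X} {σ t : ℤ} (hσt : σ ≤ t)
    (hx : ∀ r ∈ Ico σ t, x (r + 1) = L r (x r) + g r) :
    x t = transition L t σ (x σ) + ∑ r ∈ Ico σ t, transition L t (r + 1) (g r) := by
  induction t, hσt using Int.leInduction with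
  | base => simp
  | succ t hσt ih =>
    rw [hx t (mem_Ico.2 ⟨hσt, lt_add_one t⟩),
      ih fun r hr => hx r (Ico_subset_Ico_right (by omega) hr),
      ← sum_Ico_add_eq_sum_Ico_add_one hσt, transition_self, transition_succ L hσt, map_add,
      map_sum, add_assoc]
    congr 2
    refine sum_congr rfl fun r hr => ?_
    rw [transition_succ L (by simp at hr; omega)]
    rfl

theorem norm_le_linRecSol {x g : ℤ → X} {σ t : ℤ} (hσt : σ ≤ t) {K : ℝ} {α : ℤ → ℝ}
    (hΦ : ∀ s ∈ Icc σ t, ‖transition L t s‖ ≤ K * ∏ r ∈ Ico s t, α r)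
    (hx : ∀ r ∈ Ico σ t, x (r + 1) = L r (x r) + g r) :
    ‖x t‖ ≤ linRecSol σ (K * ‖x σ‖) α (fun r => K * ‖g r‖) t := by
  rw [eq_transition_add_sum L hσt hx, linRecSol]
  refine (norm_add_le _ _).trans
    (add_le_add ?_ ((norm_sum_le _ _).trans (sum_le_sum fun r hr => ?_)))
  · calc ‖transition L t σ (x σ)‖ ≤ ‖transition L t σ‖ * ‖x σ‖ := (transition L t σ).le_opNorm _
      _ ≤ (K * ∏ r ∈ Ico σ t, α r) * ‖x σ‖ := by
        gcongr
        exact hΦ σ (mem_Icc.2 ⟨le_rfl, hσt⟩)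
      _ = _ := by ring
  · have hr := mem_Ico.1 hr
    calc ‖transition L t (r + 1) (g r)‖ ≤ ‖transition L t (r + 1)‖ * ‖g r‖ :=
          (transition L t (r + 1)).le_opNorm _
      _ ≤ (K * ∏ s ∈ Ico (r + 1) t, α s) * ‖g r‖ := by
        gcongr
        exact hΦ (r + 1) (mem_Icc.2 ⟨by omega, hr.2⟩)
      _ = _ := by ring

end Transition

section LinRecSol

variable {σ : ℤ} {w₀ : ℝ} {A g : ℤ → ℝ}

@[simp]
theorem linRecSol_self : linRecSol σ w₀ A g σ = w₀ := by
  simp [linRecSol]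

theorem linRecSol_succ {t : ℤ} (h : σ ≤ t) :
    linRecSol σ w₀ A g (t + 1) = A t * linRecSol σ w₀ A g t + g t := by
  rw [linRecSol, linRecSol, ← prod_Ico_mul_eq_prod_Ico_add_one h,
    ← sum_Ico_add_eq_sum_Ico_add_one h, Ico_self, prod_empty, one_mul, mul_add, mul_sum]
  have hprod : ∀ m ∈ Ico σ t,
      (∏ r ∈ Ico (m + 1) (t + 1), A r) * g m = A t * ((∏ r ∈ Ico (m + 1) t, A r) * g m) := by
    intro m hm
    rw [← prod_Ico_mul_eq_prod_Ico_add_one (by simp at hm; omega)]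
    ring
  rw [sum_congr rfl hprod]
  ring

theorem le_linRecSol_of_le_linRecSol {t : ℤ} (hσt : σ ≤ t) {d q y : ℤ → ℝ}
    (hA : ∀ r, 0 ≤ A r) (hq : ∀ r, 0 ≤ q r)
    (hy : ∀ m ∈ Icc σ t, y m ≤ linRecSol σ w₀ A g m)
    (hg : ∀ m ∈ Ico σ t, g m ≤ d m + q m * y m) :
    y t ≤ linRecSol σ w₀ (fun r => A r + q r) d t := by
  suffices key : ∀ m, σ ≤ m → m ≤ t →
      linRecSol σ w₀ A g m ≤ linRecSol σ w₀ (fun r => A r + q r) d m from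
    (hy t (mem_Icc.2 ⟨hσt, le_rfl⟩)).trans (key t hσt le_rfl)
  intro m hσm
  induction m, hσm using Int.leInduction with
  | base => simp
  | succ m hσm ih =>
    intro hmt
    have hym := hy m (mem_Icc.2 ⟨hσm, by omega⟩)
    have hgm := hg m (mem_Ico.2 ⟨hσm, by omega⟩)
    have hAq : 0 ≤ A m + q m := add_nonneg (hA m) (hq m)
    rw [linRecSol_succ hσm, linRecSol_succ hσm]
    calc A m * linRecSol σ w₀ A g m + g m
        ≤ (A m + q m) * linRecSol σ w₀ A g m + d m := by nlinarith [hq m]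
      _ ≤ (A m + q m) * linRecSol σ w₀ (fun r => A r + q r) d m + d m := by
        gcongr
        exact ih (by omega)

end LinRecSol

theorem phi_self {X : Type*} (F : ℤ → X → X) (σ : ℤ) (u : X) : phi F σ σ u = u := by
  simp [phi, sol]

theorem phi_succ {X : Type*} (F : ℤ → X → X) {σ t : ℤ} (h : σ ≤ t) (u : X) :
    phi F (t + 1) σ u = F t (phi F t σ u) := by
  rw [phi, phi, show (t + 1 - σ).toNat = (t - σ).toNat + 1 by omega, sol,
    Int.toNat_of_nonneg (sub_nonneg.2 h), add_sub_cancel]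

theorem phi_mem_of_mapsTo {X : Type*} {F : ℤ → X → X} {U : ℤ → Set X} {σ t : ℤ} (hσt : σ ≤ t)
    (hF : ∀ r ∈ Ico σ t, Set.MapsTo (F r) (U r) (U (r + 1))) {u : X} (hu : u ∈ U σ) :
    phi F t σ u ∈ U t := by
  induction t, hσt using Int.leInduction with
  | base => rwa [phi_self]
  | succ t hσt ih =>
    rw [phi_succ F hσt]
    exact hF t (mem_Ico.2 ⟨hσt, lt_add_one t⟩)
      (ih fun r hr => hF r (Ico_subset_Ico_right (by omega) hr))

theorem norm_phi_le {X : Type*} [NormedAddCommGroup X] [NormedSpace ℝ X] {σ τ : ℤ} (hστ : σ ≤ τ)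
    {U : ℤ → Set X} {L : ℤ → X →L[ℝ] X} {N F : ℤ → X → X}
    (hF : ∀ t ∈ Ico σ τ, ∀ v ∈ U t, F t v = L t v + N t v)
    (hFmap : ∀ t ∈ Ico σ τ, Set.MapsTo (F t) (U t) (U (t + 1)))
    {K : ℝ} (hK : 0 ≤ K) {α a b : ℤ → ℝ} (hα : ∀ t, 0 ≤ α t) (ha : ∀ t, 0 ≤ a t)
    (hΦ : ∀ s t, σ ≤ s → s ≤ t → t ≤ τ → ‖transition L t s‖ ≤ K * ∏ r ∈ Ico s t, α r)
    (hN : ∀ t ∈ Ico σ τ, ∀ v ∈ U t, ‖N t v‖ ≤ b t + a t * ‖v‖) {u : X} (hu : u ∈ U σ) :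
    ‖phi F τ σ u‖ ≤ K * (∏ r ∈ Ico σ τ, (α r + K * a r)) * ‖u‖
      + K * ∑ s ∈ Ico σ τ, b s * ∏ r ∈ Ico (s + 1) τ, (α r + K * a r) := by
  set x : ℤ → X := fun t => phi F t σ u
  have hmem : ∀ t ∈ Ico σ τ, x t ∈ U t := fun t ht =>
    phi_mem_of_mapsTo (mem_Ico.1 ht).1
      (fun r hr => hFmap r (Ico_subset_Ico_right (mem_Ico.1 ht).2.le hr)) hu
  have hx : ∀ t ∈ Ico σ τ, x (t + 1) = L t (x t) + N t (x t) := fun t ht =>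
    (phi_succ F (mem_Ico.1 ht).1 u).trans (hF t ht _ (hmem t ht))
  have hy : ∀ m ∈ Icc σ τ, ‖x m‖ ≤ linRecSol σ (K * ‖u‖) α (fun t => K * ‖N t (x t)‖) m := by
    intro m hm
    obtain ⟨hσm, hmτ⟩ := mem_Icc.1 hm
    have := norm_le_linRecSol L hσm (fun s hs => hΦ s m (mem_Icc.1 hs).1 (mem_Icc.1 hs).2 hmτ)
      fun r hr => hx r (Ico_subset_Ico_right hmτ hr)
    rwa [show x σ = u from phi_self F σ u] at this
  have hg : ∀ m ∈ Ico σ τ, K * ‖N m (x m)‖ ≤ K * b m + K * a m * ‖x m‖ := fun m hm =>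
    calc K * ‖N m (x m)‖ ≤ K * (b m + a m * ‖x m‖) := by gcongr; exact hN m hm _ (hmem m hm)
      _ = K * b m + K * a m * ‖x m‖ := by ring
  calc ‖phi F τ σ u‖
      ≤ linRecSol σ (K * ‖u‖) (fun r => α r + K * a r) (fun r => K * b r) τ :=
        le_linRecSol_of_le_linRecSol hστ hα (fun r => mul_nonneg hK (ha r)) hy hg
    _ = _ := by
      rw [linRecSol, mul_sum]
      congr 1
      · ring
      · exact sum_congr rfl fun s _ => by ring

theorem mul_sum_Ico_sub_le_of_tendsto {f : ℤ → ℝ} (hf : ∀ t, 0 ≤ f t) {c R : ℝ} (hc : 0 ≤ c)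
    {τ : ℤ} (h : Tendsto (fun n : ℕ => c * ∑ s ∈ Ico (τ - n) τ, f s) atTop (𝓝 R)) (n : ℕ) :
    c * ∑ s ∈ Ico (τ - n) τ, f s ≤ R :=
  Monotone.ge_of_tendsto (fun m n hmn => mul_le_mul_of_nonneg_left
    (sum_le_sum_of_subset_of_nonneg (Ico_subset_Ico (by omega) le_rfl) fun t _ _ => hf t) hc) h n

theorem pullback_absorbing_set_general
    {X : Type*} [NormedAddCommGroup X] [NormedSpace ℝ X]
    -- discrete interval I, unbounded below
    (I : Set ℤ) (hI : ∀ ⦃a b c : ℤ⦄, a ∈ I → c ∈ I → a ≤ b → b ≤ c → b ∈ I)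
    (hIlb : ∀ t : ℤ, ∃ s ∈ I, s ≤ t)
    (ρ : ℝ) (hρ : 0 < ρ)
    -- semilinear right-hand side F_t = L_t + N_t : U_t → U_{t+1}
    (U : ℤ → Set X)
    (L : ℤ → X →L[ℝ] X) (N : ℤ → X → X)
    (F : ℤ → X → X)
    (hF : ∀ t, t ∈ I → t + 1 ∈ I → ∀ u ∈ U t, F t u = L t u + N t u)
    (hFmap : ∀ t, t ∈ I → t + 1 ∈ I → ∀ u ∈ U t, F t u ∈ U (t + 1))
    (K : ℝ) (hK : 1 ≤ K) (α : ℤ → ℝ) (hα : ∀ t, 0 ≤ α t)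
    (hΦ : ∀ s t : ℤ, s ∈ I → t ∈ I → s ≤ t →
      ‖transOp L s (t - s).toNat‖ ≤ K * ∏ r ∈ Finset.Ico s t, α r)
    (a b : ℤ → ℝ) (ha : ∀ t, 0 ≤ a t) (hb : ∀ t, 0 ≤ b t)
    (hN : ∀ t, t ∈ I → t + 1 ∈ I → ∀ u ∈ U t, ‖N t u‖ ≤ b t + a t * ‖u‖)
    -- limit relations
    (hlim : ∀ τ ∈ I,
      Tendsto (fun s : ℕ => ∏ r ∈ Finset.Ico (τ - (s : ℤ)) τ, (α r + K * a r)) atTop (𝓝 0))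
    (R : ℤ → ℝ)
    (hR : ∀ τ ∈ I,
      Tendsto (fun n : ℕ =>
          K * ∑ s ∈ Finset.Ico (τ - (n : ℤ)) τ,
            b s * ∏ r ∈ Finset.Ico (s + 1) τ, (α r + K * a r))
        atTop (𝓝 (R τ))) :
    -- (Δ) is pullback dissipative with absorbing set 𝓐(τ) = {u ∈ U_τ : ‖u‖ ≤ ρ + R_τ}
    (∀ τ ∈ I, ∀ B : ℤ → Set X, (∀ t ∈ I, B t ⊆ U t) →
      (∃ C : ℝ, ∀ t ∈ I, ∀ u ∈ B t, ‖u‖ ≤ C) →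
      ∃ S : ℕ, ∀ s : ℕ, S ≤ s →
        ∀ u ∈ B (τ - (s : ℤ)), phi F τ (τ - (s : ℤ)) u ∈ U τ ∧ ‖phi F τ (τ - (s : ℤ)) u‖ ≤ ρ + R τ) ∧
    -- uniform version
    ((∀ ε : ℝ, 0 < ε → ∃ S : ℕ, ∀ s : ℕ, S ≤ s → ∀ τ ∈ I,
        ∏ r ∈ Finset.Ico (τ - (s : ℤ)) τ, (α r + K * a r) < ε) →
      ∀ B : ℤ → Set X, (∀ t ∈ I, B t ⊆ U t) →
        (∃ C : ℝ, ∀ t ∈ I, ∀ u ∈ B t, ‖u‖ ≤ C) →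
        ∃ S : ℕ, ∀ τ ∈ I, ∀ s : ℕ, S ≤ s →
          ∀ u ∈ B (τ - (s : ℤ)), phi F τ (τ - (s : ℤ)) u ∈ U τ ∧ ‖phi F τ (τ - (s : ℤ)) u‖ ≤ ρ + R τ) := by
  have hK0 : 0 ≤ K := zero_le_one.trans hK
  have hc : ∀ r, 0 ≤ α r + K * a r := fun r => add_nonneg (hα r) (mul_nonneg hK0 (ha r))
  have hdown : ∀ τ ∈ I, ∀ t ≤ τ, t ∈ I := fun τ hτ t ht =>
    let ⟨s, hs, hst⟩ := hIlb t; hI hs hτ hst ht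
  have absorb : ∀ C > 0, ∀ τ ∈ I, ∀ s : ℕ, ∀ u ∈ U (τ - s), ‖u‖ ≤ C →
      ∏ r ∈ Ico (τ - (s : ℤ)) τ, (α r + K * a r) ≤ ρ / (K * C) →
      phi F τ (τ - s) u ∈ U τ ∧ ‖phi F τ (τ - s) u‖ ≤ ρ + R τ := by
    intro C hC τ hτ s u hu huC hP
    have hIco : ∀ t ∈ Ico (τ - (s : ℤ)) τ, t ∈ I ∧ t + 1 ∈ I := fun t ht =>
      ⟨hdown τ hτ t (mem_Ico.1 ht).2.le, hdown τ hτ _ (mem_Ico.1 ht).2⟩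
    have hFmap' := fun t ht v hv => hFmap t (hIco t ht).1 (hIco t ht).2 v hv
    refine ⟨phi_mem_of_mapsTo (by omega) hFmap' hu, ?_⟩
    refine (norm_phi_le (by omega) (fun t ht => hF t (hIco t ht).1 (hIco t ht).2) hFmap' hK0 hα
      ha (fun s t hs hst htτ => hΦ s t (hdown τ hτ s (by omega)) (hdown τ hτ t htτ) hst)
      (fun t ht => hN t (hIco t ht).1 (hIco t ht).2) hu).trans
      (add_le_add ?_ (mul_sum_Ico_sub_le_of_tendsto
        (fun t => mul_nonneg (hb t) (prod_nonneg fun r _ => hc r)) hK0 (hR τ hτ) s))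
    calc K * (∏ r ∈ Ico (τ - (s : ℤ)) τ, (α r + K * a r)) * ‖u‖ ≤ K * (ρ / (K * C)) * C := by
          gcongr
      _ = ρ := by field_simp
  refine ⟨fun τ hτ B hBU ⟨C, hC⟩ => ?_, fun hunif B hBU ⟨C, hC⟩ => ?_⟩
  · obtain ⟨S, hS⟩ := eventually_atTop.1 ((hlim τ hτ).eventually
      (ge_mem_nhds (by positivity : 0 < ρ / (K * max C 1))))
    exact ⟨S, fun s hs u hu => absorb (max C 1) (by positivity) τ hτ s u
      (hBU _ (hdown τ hτ _ (by omega)) hu)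
      ((hC _ (hdown τ hτ _ (by omega)) u hu).trans (le_max_left C 1)) (hS s hs)⟩
  · obtain ⟨S, hS⟩ := hunif (ρ / (K * max C 1)) (by positivity)
    exact ⟨S, fun τ hτ s hs u hu => absorb (max C 1) (by positivity) τ hτ s u
      (hBU _ (hdown τ hτ _ (by omega)) hu)
      ((hC _ (hdown τ hτ _ (by omega)) u hu).trans (le_max_left C 1)) (hS s hs τ hτ).le⟩

/-- pullback absorbing sets of semilinear difference equations
(Proposition 2 of the paper). -/
theorem pullback_absorbing_set
    {X : Type*} [NormedAddCommGroup X] [NormedSpace ℝ X] [CompleteSpace X]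
    -- discrete interval I, unbounded below
    (I : Set ℤ) (hI : ∀ ⦃a b c : ℤ⦄, a ∈ I → c ∈ I → a ≤ b → b ≤ c → b ∈ I)
    (hIlb : ∀ t : ℤ, ∃ s ∈ I, s ≤ t)
    (ρ : ℝ) (hρ : 0 < ρ)
    -- semilinear right-hand side F_t = L_t + N_t : U_t → U_{t+1}
    (U : ℤ → Set X) (hUcl : ∀ t ∈ I, IsClosed (U t))
    (L : ℤ → X →L[ℝ] X) (N : ℤ → X → X)
    (hNcont : ∀ t, t ∈ I → t + 1 ∈ I → ContinuousOn (N t) (U t))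
    (F : ℤ → X → X)
    (hF : ∀ t, t ∈ I → t + 1 ∈ I → ∀ u ∈ U t, F t u = L t u + N t u)
    (hFmap : ∀ t, t ∈ I → t + 1 ∈ I → ∀ u ∈ U t, F t u ∈ U (t + 1))
    (K : ℝ) (hK : 1 ≤ K) (α : ℤ → ℝ) (hα : ∀ t, 0 ≤ α t)
    (hΦ : ∀ s t : ℤ, s ∈ I → t ∈ I → s ≤ t →
      ‖transOp L s (t - s).toNat‖ ≤ K * ∏ r ∈ Finset.Ico s t, α r)
    (a b : ℤ → ℝ) (ha : ∀ t, 0 ≤ a t) (hb : ∀ t, 0 ≤ b t)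
    (hN : ∀ t, t ∈ I → t + 1 ∈ I → ∀ u ∈ U t, ‖N t u‖ ≤ b t + a t * ‖u‖)
    -- limit relations
    (hlim : ∀ τ ∈ I,
      Tendsto (fun s : ℕ => ∏ r ∈ Finset.Ico (τ - (s : ℤ)) τ, (α r + K * a r)) atTop (𝓝 0))
    (R : ℤ → ℝ)
    (hR : ∀ τ ∈ I,
      Tendsto (fun n : ℕ =>
          K * ∑ s ∈ Finset.Ico (τ - (n : ℤ)) τ,
            b s * ∏ r ∈ Finset.Ico (s + 1) τ, (α r + K * a r))
        atTop (𝓝 (R τ))) :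
    -- (Δ) is pullback dissipative with absorbing set 𝓐(τ) = {u ∈ U_τ : ‖u‖ ≤ ρ + R_τ}
    (∀ τ ∈ I, ∀ B : ℤ → Set X, (∀ t ∈ I, B t ⊆ U t) →
      (∃ C : ℝ, ∀ t ∈ I, ∀ u ∈ B t, ‖u‖ ≤ C) →
      ∃ S : ℕ, ∀ s : ℕ, S ≤ s →
        ∀ u ∈ B (τ - (s : ℤ)), phi F τ (τ - (s : ℤ)) u ∈ U τ ∧ ‖phi F τ (τ - (s : ℤ)) u‖ ≤ ρ + R τ) ∧
    -- uniform version
    ((∀ ε : ℝ, 0 < ε → ∃ S : ℕ, ∀ s : ℕ, S ≤ s → ∀ τ ∈ I,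
        ∏ r ∈ Finset.Ico (τ - (s : ℤ)) τ, (α r + K * a r) < ε) →
      ∀ B : ℤ → Set X, (∀ t ∈ I, B t ⊆ U t) →
        (∃ C : ℝ, ∀ t ∈ I, ∀ u ∈ B t, ‖u‖ ≤ C) →
        ∃ S : ℕ, ∀ τ ∈ I, ∀ s : ℕ, S ≤ s →
          ∀ u ∈ B (τ - (s : ℤ)), phi F τ (τ - (s : ℤ)) u ∈ U τ ∧ ‖phi F τ (τ - (s : ℤ)) u‖ ≤ ρ + R τ) :=
  pullback_absorbing_set_general I hI hIlb ρ hρ U L N F hF hFmap K hK α hα hΦ a b ha hb hN hlim R hR
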